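/- arXiv:2503.24207 — 7 statements merged into one kernel-verified Lean document; each statement's English description precedes it below -/
import Mathlib

section
/- Let A, B ∈ E^[∞] be infinite block sequences such that ⟨A⟩ ∩ ⟨B⟩ is infinite-dimensional. Then there exists C ∈ E^[∞] such that ⟨C⟩ = ⟨A⟩ ∩ ⟨B⟩; that is, the intersection of two block subspaces is itself a block subspace whenever it is infinite-dimensional. -/
noncomputable section

variable {𝔽 : Type} [Field 𝔽]

/-- The `ℵ₀`-dimensional vector space `E` over `𝔽`, realised as finitely supported
functions `ℕ →₀ 𝔽`; the fixed basis is `eVec 𝔽 n = Finsupp.single n 1`. -/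
abbrev EVec (𝔽 : Type) [Field 𝔽] : Type := ℕ →₀ 𝔽

/-- The basis vector `e n`. -/
def eVec (𝔽 : Type) [Field 𝔽] (n : ℕ) : EVec 𝔽 := Finsupp.single n 1

/-- `x < y` iff `max (supp x) < min (supp y)`, i.e. every element of the support of `x`
is below every element of the support of `y`. -/
def BlockLt (x y : EVec 𝔽) : Prop := ∀ i ∈ x.support, ∀ j ∈ y.support, i < j

/-- An infinite block sequence: a `<`-increasing sequence of nonzero vectors. -/
def IsBlockSeq (A : ℕ → EVec 𝔽) : Prop :=
  (∀ n, A n ≠ 0) ∧ ∀ m n : ℕ, m < n → BlockLt (A m) (A n)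

/-- A finite block sequence (as a list). -/
def IsBlockList (a : List (EVec 𝔽)) : Prop :=
  (∀ x ∈ a, x ≠ 0) ∧ a.Pairwise BlockLt

/-- `⟨A⟩`, the span of (the range of) a block sequence. -/
def spanSeq (A : ℕ → EVec 𝔽) : Submodule 𝔽 (EVec 𝔽) := Submodule.span 𝔽 (Set.range A)

/-- `⟨a⟩`, the span of a finite block sequence. -/
def spanList (a : List (EVec 𝔽)) : Submodule 𝔽 (EVec 𝔽) := Submodule.span 𝔽 {x | x ∈ a}

/-- `A/N = (x_n)_{n ≥ N}`. -/
def tailSeq (A : ℕ → EVec 𝔽) (N : ℕ) : ℕ → EVec 𝔽 := fun n => A (n + N)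

/-- `r_n(A) = (x_0, …, x_{n-1})`. -/
def rApprox (A : ℕ → EVec 𝔽) (n : ℕ) : List (EVec 𝔽) := (List.range n).map A

/-- `A ≤ B` iff `⟨A⟩ ⊆ ⟨B⟩`. -/
def SeqLe (A B : ℕ → EVec 𝔽) : Prop := spanSeq A ≤ spanSeq B

/-- `A ≤* B` iff `A/N ≤ B` for some `N`. -/
def SeqLeStar (A B : ℕ → EVec 𝔽) : Prop := ∃ N, SeqLe (tailSeq A N) B

/-- `d_A(a)`: the least `N` such that `max (supp a)` lies below (the support of) every
vector of `A/N` (this is `0` when `a` is empty). -/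
def depthIn (A : ℕ → EVec 𝔽) (a : List (EVec 𝔽)) : ℕ :=
  sInf {N | ∀ x ∈ a, ∀ k, N ≤ k → BlockLt x (A k)}

/-- `⟨C⟩ ⊆ Y`, understood modulo zero. -/
def SpanSub (C : ℕ → EVec 𝔽) (Y : Set (EVec 𝔽)) : Prop :=
  ∀ x ∈ spanSeq C, x ≠ 0 → x ∈ Y

/-- `Y` is big if `⟨C⟩ ⊆ Y` (mod zero) for some infinite block sequence `C`. -/
def BigSet (Y : Set (EVec 𝔽)) : Prop := ∃ C, IsBlockSeq C ∧ SpanSub C Y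

/-- `Y` is small if it is not big. -/
def SmallSet (Y : Set (EVec 𝔽)) : Prop := ¬ BigSet Y

/-- `Y` is very small if `Y ∪ Z` is small for every small `Z`. -/
def VerySmallSet (Y : Set (EVec 𝔽)) : Prop :=
  ∀ Z : Set (EVec 𝔽), SmallSet Z → SmallSet (Y ∪ Z)

/-- A semicoideal: a `≤*`-upward closed set of infinite block sequences. -/
def Semicoideal (H : Set (ℕ → EVec 𝔽)) : Prop :=
  (∀ A ∈ H, IsBlockSeq A) ∧
    ∀ A ∈ H, ∀ B : ℕ → EVec 𝔽, IsBlockSeq B → SeqLeStar A B → B ∈ H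

/-- `H ↾ A = {B ∈ H : B ≤ A}`. -/
def restrictBelow (H : Set (ℕ → EVec 𝔽)) (A : ℕ → EVec 𝔽) : Set (ℕ → EVec 𝔽) :=
  {B ∈ H | SeqLe B A}

/-- `Y ⊆ E` is `H`-dense below `A`. -/
def HDense (H : Set (ℕ → EVec 𝔽)) (Y : Set (EVec 𝔽)) (A : ℕ → EVec 𝔽) : Prop :=
  ∀ B ∈ restrictBelow H A, ∃ C, IsBlockSeq C ∧ SeqLe C B ∧ SpanSub C Y

/-- `H` is full. -/
def FullFam (H : Set (ℕ → EVec 𝔽)) : Prop :=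
  ∀ Y : Set (EVec 𝔽), ∀ A ∈ H, HDense H Y A → ∃ B ∈ restrictBelow H A, SpanSub B Y

/-- `H` is a coideal. -/
def CoidealFam (H : Set (ℕ → EVec 𝔽)) : Prop :=
  ∀ Y : Set (EVec 𝔽), ∀ A ∈ H, ∃ B ∈ restrictBelow H A, SpanSub B Y ∨ SpanSub B Yᶜ

/-- `B` weakly diagonalises the `≤`-decreasing sequence `As`. -/
def WeakDiag (As : ℕ → ℕ → EVec 𝔽) (B : ℕ → EVec 𝔽) : Prop :=
  SeqLe B (As 0) ∧ ∀ n, SeqLeStar B (As n)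

/-- The (p)-property. -/
def PProp (H : Set (ℕ → EVec 𝔽)) : Prop :=
  ∀ As : ℕ → ℕ → EVec 𝔽, (∀ n, As n ∈ H) → (∀ n, SeqLe (As (n + 1)) (As n)) →
    ∃ B ∈ H, WeakDiag As B

/-- The (q)-property: `lo m`, `hi m` are the endpoints of the finite intervals `I m`. -/
def QProp (H : Set (ℕ → EVec 𝔽)) : Prop :=
  ∀ A ∈ H, ∀ lo hi : ℕ → ℕ, (∀ m, lo m ≤ hi m) → (∀ m, hi m < lo (m + 1)) →
    ∃ B ∈ restrictBelow H A, ∀ n : ℕ, ∃ m : ℕ,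
      spanList (rApprox B n) ≤ spanList (rApprox A (lo m - 1)) ∧
      SeqLe (tailSeq B n) (tailSeq A (hi m))

/-- `B` diagonalises the `≤`-decreasing sequence `As` within `A`. -/
def DiagWithin (A : ℕ → EVec 𝔽) (As : ℕ → ℕ → EVec 𝔽) (B : ℕ → EVec 𝔽) : Prop :=
  SeqLe B A ∧ ∀ n, SeqLe (tailSeq B n) (As (depthIn A (rApprox B n)))

/-- `H` is selective. -/
def SelectiveFam (H : Set (ℕ → EVec 𝔽)) : Prop :=
  ∀ A ∈ H, ∀ As : ℕ → ℕ → EVec 𝔽, (∀ n, As n ∈ H) →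
    (∀ n, SeqLe (As (n + 1)) (As n)) → SeqLe (As 0) A →
    ∃ B ∈ H, DiagWithin A As B

/-- Two subspaces are almost disjoint if their intersection is finite dimensional. -/
def AlmostDisjoint (V W : Submodule 𝔽 (EVec 𝔽)) : Prop :=
  FiniteDimensional 𝔽 ↥(V ⊓ W)

/-- An almost disjoint family of block sequences. -/
def ADFamily (𝒜 : Set (ℕ → EVec 𝔽)) : Prop :=
  (∀ A ∈ 𝒜, IsBlockSeq A) ∧
    ∀ A ∈ 𝒜, ∀ B ∈ 𝒜, A ≠ B → AlmostDisjoint (spanSeq A) (spanSeq B)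

/-- A maximal almost disjoint (mad) family of block sequences. -/
def MadFamily (𝒜 : Set (ℕ → EVec 𝔽)) : Prop :=
  ADFamily 𝒜 ∧
    ∀ C : ℕ → EVec 𝔽, IsBlockSeq C →
      ∃ A ∈ 𝒜, ¬ AlmostDisjoint (spanSeq C) (spanSeq A)

/-- `Y ∈ I(𝒜)`: some finite union of spans of members of `𝒜` almost covers `Y`. -/
def MemI (𝒜 : Set (ℕ → EVec 𝔽)) (Y : Set (EVec 𝔽)) : Prop :=
  ∃ F : Finset (ℕ → EVec 𝔽), ↑F ⊆ 𝒜 ∧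
    SmallSet (Y \ ⋃ A ∈ F, (spanSeq A : Set (EVec 𝔽)))

/-- `Y ∈ I⁺(𝒜)`. -/
def MemIplus (𝒜 : Set (ℕ → EVec 𝔽)) (Y : Set (EVec 𝔽)) : Prop := ¬ MemI 𝒜 Y

/-- `Y ∈ I⁺⁺(𝒜)`: infinitely many `A ∈ 𝒜` with `Y ∩ ⟨A⟩` big. -/
def MemIpp (𝒜 : Set (ℕ → EVec 𝔽)) (Y : Set (EVec 𝔽)) : Prop :=
  {A ∈ 𝒜 | BigSet (Y ∩ (spanSeq A : Set (EVec 𝔽)))}.Infinite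

/-- `H⁻(𝒜)`. -/
def HMinus (𝒜 : Set (ℕ → EVec 𝔽)) : Set (ℕ → EVec 𝔽) :=
  {B | IsBlockSeq B ∧ MemIplus 𝒜 (spanSeq B : Set (EVec 𝔽))}

/-- `H(𝒜)`. -/
def HFam (𝒜 : Set (ℕ → EVec 𝔽)) : Set (ℕ → EVec 𝔽) :=
  {B | IsBlockSeq B ∧ MemIpp 𝒜 (spanSeq B : Set (EVec 𝔽))}

/-- `S` splits the interval partition whose intervals are `[b n, b (n+1))`
(where `b 0 = 0` and `b` is strictly monotone). -/
def SplitsPartition (S : Set ℕ) (b : ℕ → ℕ) : Prop :=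
  {n | ∀ k, b n ≤ k → k < b (n + 1) → k ∈ S}.Infinite ∧
  {n | ∀ k, b n ≤ k → k < b (n + 1) → k ∉ S}.Infinite

/-- `Z_S = span{e_n : n ∈ S}`. -/
def ZSub (𝔽 : Type) [Field 𝔽] (S : Set ℕ) : Submodule 𝔽 (EVec 𝔽) :=
  Submodule.span 𝔽 ((fun n => eVec 𝔽 n) '' S)

/-- The Ellentuck set `[a, A]`. -/
def EllSet (a : List (EVec 𝔽)) (A : ℕ → EVec 𝔽) : Set (ℕ → EVec 𝔽) :=
  {B | IsBlockSeq B ∧ SeqLe B A ∧ rApprox B a.length = a}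

/-- `𝒜ℛ ↾ A`: finite block sequences whose span lies in `⟨A⟩`. -/
def ARbelow (A : ℕ → EVec 𝔽) : Set (List (EVec 𝔽)) :=
  {a | IsBlockList a ∧ spanList a ≤ spanSeq A}

/-- `𝒜ℛ ↾ [a, A]`: members of `𝒜ℛ ↾ A` extending `a`. -/
def ARbelowIn (a : List (EVec 𝔽)) (A : ℕ → EVec 𝔽) : Set (List (EVec 𝔽)) :=
  {b ∈ ARbelow A | a <+: b}

/-- `{D b}` is a dense open family below `[a, A]` in `H`. -/
def DenseOpenBelow (H : Set (ℕ → EVec 𝔽)) (a : List (EVec 𝔽)) (A : ℕ → EVec 𝔽)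
    (D : List (EVec 𝔽) → Set (ℕ → EVec 𝔽)) : Prop :=
  ∀ b ∈ ARbelowIn a A,
    D b ⊆ H ∩ EllSet b A ∧
    (∀ B ∈ D b, ∀ C ∈ H ∩ EllSet b B, C ∈ D b) ∧
    (∀ B ∈ H ∩ EllSet b A, ∃ C ∈ H ∩ EllSet b B, C ∈ D b)

/-- `B` diagonalises the dense open family `{D b}` below `[a, A]` in `H`. -/
def DiagFamily (H : Set (ℕ → EVec 𝔽)) (a : List (EVec 𝔽)) (A : ℕ → EVec 𝔽)
    (D : List (EVec 𝔽) → Set (ℕ → EVec 𝔽)) (B : ℕ → EVec 𝔽) : Prop :=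
  B ∈ H ∩ EllSet a A ∧
    ∀ b ∈ ARbelowIn a A, ∃ Ab ∈ D b, EllSet b B ⊆ EllSet b Ab

/-- `H` is semiselective. -/
def Semiselective (H : Set (ℕ → EVec 𝔽)) : Prop :=
  ∀ A ∈ H, ∀ a ∈ ARbelow A, ∀ D : List (EVec 𝔽) → Set (ℕ → EVec 𝔽),
    DenseOpenBelow H a A D → ∃ B, DiagFamily H a A D B

/-- `D` is a dense open subset of `(H, ≤)`. -/
def DenseOpenIn (H D : Set (ℕ → EVec 𝔽)) : Prop :=
  D ⊆ H ∧ (∀ A ∈ D, ∀ B ∈ H, SeqLe B A → B ∈ D) ∧ ∀ A ∈ H, ∃ B ∈ D, SeqLe B A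
def msup (v : EVec 𝔽) : ℕ := v.support.sup id

lemma msup_mem {v : EVec 𝔽} (hv : v ≠ 0) : msup v ∈ v.support := by
  have h : v.support.Nonempty := Finsupp.support_nonempty_iff.mpr hv
  obtain ⟨b, hb, hb2⟩ := Finset.exists_mem_eq_sup v.support h id
  rw [msup, hb2]; exact hb

lemma le_msup {v : EVec 𝔽} {i : ℕ} (h : i ∈ v.support) : i ≤ msup v :=
  Finset.le_sup (f := id) h

lemma apply_eq_zero_of_gt {v : EVec 𝔽} {i : ℕ} (h : msup v < i) : v i = 0 := by
  by_contra h0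
  exact absurd (le_msup (Finsupp.mem_support_iff.mpr h0)) (not_le.mpr h)

def SplitsAt (A : ℕ → EVec 𝔽) (n : ℕ) : Prop :=
  ∀ i, (∀ j ∈ (A i).support, j ≤ n) ∨ (∀ j ∈ (A i).support, n < j)

lemma trunc_block (A : ℕ → EVec 𝔽) (n : ℕ) (h : SplitsAt A n) (i : ℕ) :
    (A i).filter (· ≤ n) = A i ∨ (A i).filter (· ≤ n) = 0 := by
  rcases h i with h1 | h1
  · left; rw [Finsupp.filter_eq_self_iff]
    intro x hx; exact h1 x (Finsupp.mem_support_iff.mpr hx)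
  · right; rw [Finsupp.filter_eq_zero_iff]
    intro x hx
    by_contra h0
    exact absurd hx (not_le.mpr (h1 x (Finsupp.mem_support_iff.mpr h0)))

lemma trunc_mem_span {A : ℕ → EVec 𝔽} {n : ℕ} (h : SplitsAt A n) {v : EVec 𝔽}
    (hv : v ∈ spanSeq A) : v.filter (· ≤ n) ∈ spanSeq A := by
  induction hv using Submodule.span_induction with
  | mem x hx =>
    obtain ⟨i, rfl⟩ := hx
    rcases trunc_block A n h i with h1 | h1 <;> rw [h1]
    · exact Submodule.subset_span ⟨i, rfl⟩
    · exact zero_mem _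
  | zero => rw [Finsupp.filter_zero]; exact zero_mem _
  | add x y _ _ hx hy => rw [Finsupp.filter_add]; exact add_mem hx hy
  | smul a x _ hx => rw [Finsupp.filter_smul]; exact Submodule.smul_mem _ _ hx

lemma exists_msup_eq {A : ℕ → EVec 𝔽} (hA : IsBlockSeq A) {v : EVec 𝔽}
    (hv : v ∈ spanSeq A) (h0 : v ≠ 0) : ∃ p, msup v = msup (A p) := by
  rw [spanSeq, Finsupp.mem_span_range_iff_exists_finsupp] at hv
  obtain ⟨c, hc⟩ := hv
  have hcne : c.support.Nonempty := by
    rcases Finset.eq_empty_or_nonempty c.support with h | h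
    · exfalso; apply h0
      rw [← hc, Finsupp.sum, h, Finset.sum_empty]
    · exact h
  set p := c.support.max' hcne with hp
  have hcp : c p ≠ 0 := Finsupp.mem_support_iff.mp (c.support.max'_mem hcne)
  have hApne : A p ≠ 0 := hA.1 p
  set m := msup (A p) with hm'
  have hm : m ∈ (A p).support := msup_mem hApne
  have hvm : v m = c p * (A p) m := by
    rw [← hc, Finsupp.sum_apply, Finsupp.sum]
    rw [Finset.sum_eq_single_of_mem p (c.support.max'_mem hcne)]
    · rw [Finsupp.smul_apply, smul_eq_mul]
    · intro i hi hne
      have hip : i < p := lt_of_le_of_ne (Finset.le_max' _ _ hi) hne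
      have : (A i) m = 0 := by
        by_contra hcon
        exact absurd (hA.2 i p hip m (Finsupp.mem_support_iff.mpr hcon) m hm) (lt_irrefl m)
      rw [Finsupp.smul_apply, this, smul_zero]
  have hvm0 : v m ≠ 0 := by
    rw [hvm]; exact mul_ne_zero hcp (Finsupp.mem_support_iff.mp hm)
  have hsub : ∀ j, v j ≠ 0 → j ≤ m := by
    intro j hj
    by_contra hjm
    push_neg at hjm
    apply hj
    rw [← hc, Finsupp.sum_apply, Finsupp.sum]
    apply Finset.sum_eq_zero
    intro i hi
    have hip : i ≤ p := Finset.le_max' _ _ hi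
    have hz : (A i) j = 0 := by
      by_contra hcon
      have hjsupp : j ∈ (A i).support := Finsupp.mem_support_iff.mpr hcon
      rcases lt_or_eq_of_le hip with h' | h'
      · exact absurd (hA.2 i p h' j hjsupp m hm) (by omega)
      · rw [h'] at hjsupp
        exact absurd (le_msup hjsupp) (by omega)
    rw [Finsupp.smul_apply, hz, smul_zero]
  refine ⟨p, le_antisymm ?_ ?_⟩
  · exact hsub _ (Finsupp.mem_support_iff.mp (msup_mem h0))
  · exact le_msup (Finsupp.mem_support_iff.mpr hvm0)

lemma splitsAt_block {A : ℕ → EVec 𝔽} (hA : IsBlockSeq A) (p : ℕ) :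
    SplitsAt A (msup (A p)) := by
  intro i
  rcases lt_trichotomy i p with h | h | h
  · left; intro j hj; exact le_of_lt (hA.2 i p h j hj _ (msup_mem (hA.1 p)))
  · subst h; left; intro j hj; exact le_msup hj
  · right; intro j hj; exact hA.2 p i h _ (msup_mem (hA.1 p)) j hj

lemma splitsAt_of_mem {A : ℕ → EVec 𝔽} (hA : IsBlockSeq A) {v : EVec 𝔽}
    (hv : v ∈ spanSeq A) (h0 : v ≠ 0) : SplitsAt A (msup v) := by
  obtain ⟨p, hp⟩ := exists_msup_eq hA hv h0
  rw [hp]; exact splitsAt_block hA p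

lemma msup_set_infinite {A B : ℕ → EVec 𝔽}
    (h : ¬ FiniteDimensional 𝔽 ↥(spanSeq A ⊓ spanSeq B)) :
    {n | ∃ u, u ∈ spanSeq A ⊓ spanSeq B ∧ u ≠ 0 ∧ msup u = n}.Infinite := by
  by_contra hfin
  rw [Set.not_infinite] at hfin
  apply h
  obtain ⟨N, hN⟩ := hfin.bddAbove
  haveI : Finite ↥(Set.Iic N) := (Set.finite_Iic N).to_subtype
  haveI : FiniteDimensional 𝔽 (↥(Set.Iic N) →₀ 𝔽) :=
    Module.Finite.equiv (Finsupp.linearEquivFunOnFinite 𝔽 𝔽 _).symm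
  haveI : FiniteDimensional 𝔽 ↥(Finsupp.supported 𝔽 𝔽 (Set.Iic N)) :=
    Module.Finite.equiv (Finsupp.supportedEquivFinsupp (M := 𝔽) (R := 𝔽) _).symm
  refine Submodule.finiteDimensional_of_le (S₂ := Finsupp.supported 𝔽 𝔽 (Set.Iic N)) ?_
  intro v hv
  rw [Finsupp.mem_supported]
  intro j hj
  by_cases hv0 : v = 0
  · rw [hv0] at hj; simp at hj
  · have hmem : msup v ∈ {n | ∃ u, u ∈ spanSeq A ⊓ spanSeq B ∧ u ≠ 0 ∧ msup u = n} :=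
      ⟨v, hv, hv0, rfl⟩
    exact le_trans (le_msup hj) (hN hmem)

/-- the intersection of two block subspaces is a block subspace
whenever it is infinite-dimensional. -/
theorem statement0 [Countable 𝔽]
    (A B : ℕ → EVec 𝔽) (hA : IsBlockSeq A) (hB : IsBlockSeq B)
    (h : ¬ FiniteDimensional 𝔽 ↥(spanSeq A ⊓ spanSeq B)) :
    ∃ C : ℕ → EVec 𝔽, IsBlockSeq C ∧ spanSeq C = spanSeq A ⊓ spanSeq B := by
  classical
  set W := spanSeq A ⊓ spanSeq B with hWdef
  set p : ℕ → Prop := fun n => ∃ u, u ∈ W ∧ u ≠ 0 ∧ msup u = n with hpdef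
  have hp : (setOf p).Infinite := msup_set_infinite h
  set nn : ℕ → ℕ := Nat.nth p with hnndef
  have hmem : ∀ k, p (nn k) := fun k => Nat.nth_mem_of_infinite hp k
  choose v hvW hvne hvm using hmem
  have key : ∀ k, ∀ w ∈ W, w.filter (· ≤ nn k) ∈ W := by
    intro k w hw
    rw [Submodule.mem_inf] at hw ⊢
    have h1 : SplitsAt A (nn k) := hvm k ▸ splitsAt_of_mem hA (Submodule.mem_inf.mp (hvW k)).1 (hvne k)
    have h2 : SplitsAt B (nn k) := hvm k ▸ splitsAt_of_mem hB (Submodule.mem_inf.mp (hvW k)).2 (hvne k)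
    exact ⟨trunc_mem_span h1 hw.1, trunc_mem_span h2 hw.2⟩
  set c : ℕ → EVec 𝔽 := fun k =>
    match k with
    | 0 => v 0
    | (k + 1) => v (k + 1) - (v (k + 1)).filter (· ≤ nn k) with hcdef
  have hcW : ∀ k, c k ∈ W := by
    intro k
    match k with
    | 0 => exact hvW 0
    | (k + 1) => exact sub_mem (hvW (k + 1)) (key k _ (hvW (k + 1)))
  have hnn_mono : ∀ {a b : ℕ}, a < b → nn a < nn b := fun h' => (Nat.nth_lt_nth hp).mpr h'
  have htop : ∀ k, v k (nn k) ≠ 0 := fun k =>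
    Finsupp.mem_support_iff.mp (hvm k ▸ msup_mem (hvne k))
  have hcne0 : ∀ k, c k (nn k) ≠ 0 := by
    intro k
    match k with
    | 0 => exact htop 0
    | (k + 1) =>
      show v (k + 1) (nn (k + 1)) - ((v (k + 1)).filter (· ≤ nn k)) (nn (k + 1)) ≠ 0
      rw [Finsupp.filter_apply, if_neg (not_le.mpr (hnn_mono k.lt_succ_self)), sub_zero]
      exact htop (k + 1)
  have hz : ∀ k j, nn k < j → v k j = 0 := fun k j hj =>
    apply_eq_zero_of_gt (by rw [hvm k]; exact hj)
  have hcupper : ∀ k j, nn k < j → c k j = 0 := by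
    intro k
    match k with
    | 0 => exact fun j hj => hz 0 j hj
    | (k + 1) =>
      intro j hj
      show v (k + 1) j - ((v (k + 1)).filter (· ≤ nn k)) j = 0
      rw [Finsupp.filter_apply]
      split <;> rw [hz (k + 1) j hj] <;> simp
  have hclower : ∀ k j, j ≤ nn k → c (k + 1) j = 0 := by
    intro k j hj
    show v (k + 1) j - ((v (k + 1)).filter (· ≤ nn k)) j = 0
    rw [Finsupp.filter_apply, if_pos hj, sub_self]
  have hblock : IsBlockSeq c := by
    constructor
    · intro k h0
      exact hcne0 k (by rw [h0]; rfl)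
    · intro m k hmk i hi j hj
      obtain ⟨k', rfl⟩ : ∃ k', k = k' + 1 := ⟨k - 1, by omega⟩
      have h1 : i ≤ nn m := by
        by_contra h'
        exact (Finsupp.mem_support_iff.mp hi) (hcupper m i (by omega))
      have h2 : nn k' < j := by
        by_contra h'
        exact (Finsupp.mem_support_iff.mp hj) (hclower k' j (by omega))
      have h3 : nn m ≤ nn k' := by
        rcases Nat.lt_or_ge m k' with h' | h'
        · exact le_of_lt (hnn_mono h')
        · have : m = k' := by omega
          rw [this]
      omega
  have main : ∀ N, ∀ w, w ∈ W → w ≠ 0 → msup w = N → w ∈ spanSeq c := by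
    intro N
    induction N using Nat.strong_induction_on with
    | _ N IH =>
      intro w hw hw0 hN
      have hpN : p N := ⟨w, hw, hw0, hN⟩
      set k := Nat.count p N with hkdef
      have hk : nn k = N := Nat.nth_count hpN
      have hckN : c k N ≠ 0 := hk ▸ hcne0 k
      set lam := w N / c k N with hlam
      set w' := w - lam • c k with hw'
      have hw'W : w' ∈ W := sub_mem hw (Submodule.smul_mem _ _ (hcW k))
      have hw'N : w' N = 0 := by
        show w N - lam • (c k N) = 0
        rw [hlam, smul_eq_mul, div_mul_cancel₀ _ hckN, sub_self]
      have hupper : ∀ j, N ≤ j → w' j = 0 := by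
        intro j hj
        rcases eq_or_lt_of_le hj with h' | h'
        · rw [← h']; exact hw'N
        · show w j - lam • (c k j) = 0
          rw [apply_eq_zero_of_gt (hN ▸ h'), hcupper k j (hk ▸ h'), smul_zero, sub_self]
      have hmemk : c k ∈ spanSeq c := Submodule.subset_span ⟨k, rfl⟩
      by_cases h0' : w' = 0
      · have : w = lam • c k := by
          have := sub_eq_zero.mp h0'
          exact this
        rw [this]
        exact Submodule.smul_mem _ _ hmemk
      · have hlt : msup w' < N := by
          by_contra h'
          push_neg at h'
          exact (Finsupp.mem_support_iff.mp (msup_mem h0')) (hupper _ h')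
        have hmem' : w' ∈ spanSeq c := IH (msup w') hlt w' hw'W h0' rfl
        have : w = w' + lam • c k := by rw [hw']; abel
        rw [this]
        exact add_mem hmem' (Submodule.smul_mem _ _ hmemk)
  refine ⟨c, hblock, le_antisymm ?_ ?_⟩
  · rw [spanSeq, Submodule.span_le]
    rintro x ⟨k, rfl⟩
    exact hcW k
  · intro w hw
    by_cases hw0 : w = 0
    · rw [hw0]; exact zero_mem _
    · exact main (msup w) w hw hw0 rfl
end
end

section
/- Suppose 𝔽 = 𝔽₂ is the two-element field. Let H ⊆ E^[∞] be a semicoideal. Then H is full if and only if H is a coideal. -/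
noncomputable section

variable {𝔽 : Type} [Field 𝔽]

section Aux

open Hindman

local notation "E2" => EVec (ZMod 2)

/-- Elements of `FS a` are finite nonempty subset sums. -/
lemma FS_exists_finset {M : Type*} [AddCommMonoid M] {a : Stream' M} {x : M}
    (h : x ∈ Hindman.FS a) : ∃ F : Finset ℕ, F.Nonempty ∧ x = ∑ i ∈ F, a.get i := by
  induction h with
  | head' a => exact ⟨{0}, ⟨0, by simp⟩, by simp [Stream'.head]⟩
  | tail' a m h ih =>
    obtain ⟨F, hF, hsum⟩ := ih
    refine ⟨F.image (· + 1), hF.image _, ?_⟩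
    rw [Finset.sum_image (by intro x _ y _ h; beta_reduce at h; omega)]
    exact hsum
  | cons' a m h ih =>
    obtain ⟨F, hF, hsum⟩ := ih
    refine ⟨insert 0 (F.image (· + 1)), ⟨0, Finset.mem_insert_self _ _⟩, ?_⟩
    rw [Finset.sum_insert (by simp), Finset.sum_image (by intro x _ y _ h; beta_reduce at h; omega)]
    rw [hsum]
    rfl

/-- Nonempty subset sums of a block sequence are nonzero. -/
lemma blockSeq_sum_ne_zero {𝔽 : Type} [Field 𝔽] {C : ℕ → EVec 𝔽} (hC : IsBlockSeq C)
    {F : Finset ℕ} (hF : F.Nonempty) : (∑ i ∈ F, C i) ≠ 0 := by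
  set i0 := F.min' hF with hi0
  have hCi0 : C i0 ≠ 0 := hC.1 i0
  obtain ⟨k, hk⟩ := Finsupp.support_nonempty_iff.2 hCi0
  intro h0
  have happ : (∑ i ∈ F, C i) k = 0 := by rw [h0]; rfl
  rw [Finset.sum_apply'] at happ
  have : ∀ i ∈ F, i ≠ i0 → C i k = 0 := by
    intro i hi hne
    have hlt : i0 < i := lt_of_le_of_ne (F.min'_le i hi) (Ne.symm hne)
    by_contra hne0
    have hk' : k ∈ (C i).support := Finsupp.mem_support_iff.2 hne0
    exact lt_irrefl k (hC.2 i0 i hlt k hk k hk')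
  rw [Finset.sum_eq_single i0 this (fun h => absurd (F.min'_mem hF) h)] at happ
  exact (Finsupp.mem_support_iff.1 hk) happ

/-- Over `ZMod 2`, nonzero elements of a span of a countable family are finite subset sums. -/
lemma mem_span_zmod2 {b : ℕ → E2} {x : E2}
    (hx : x ∈ Submodule.span (ZMod 2) (Set.range b)) (hx0 : x ≠ 0) :
    ∃ F : Finset ℕ, F.Nonempty ∧ x = ∑ i ∈ F, b i := by
  rw [Submodule.mem_span_set] at hx
  obtain ⟨c, hsupp, hsum⟩ := hx
  have hone : ∀ u : ZMod 2, u ≠ 0 → u = 1 := by decide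
  have hx' : x = ∑ v ∈ c.support, v := by
    rw [← hsum, Finsupp.sum]
    refine Finset.sum_congr rfl fun v hv => ?_
    rw [hone _ (Finsupp.mem_support_iff.1 hv), one_smul]
  have hTne : c.support.Nonempty := by
    rcases Finset.eq_empty_or_nonempty c.support with h | h
    · exact absurd (by rw [hx', h, Finset.sum_empty]) hx0
    · exact h
  refine ⟨c.support.image (Function.invFun b), hTne.image _, ?_⟩
  have hinv : ∀ v ∈ c.support, b (Function.invFun b v) = v := fun v hv =>
    Function.invFun_eq (hsupp hv)
  rw [Finset.sum_image (fun v hv w hw h => by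
    rw [← hinv v hv, ← hinv w hw, h])]
  rw [hx']
  exact (Finset.sum_congr rfl fun v hv => (hinv v hv)).symm

/-- Pigeonhole: some interval sum has support entirely above `N`. -/
lemma exists_hi_support (b : ℕ → E2)
    (hb : ∀ F : Finset ℕ, F.Nonempty → (∑ i ∈ F, b i) ≠ 0) (N : ℕ) :
    ∃ j1 j2 : ℕ, j1 < j2 ∧ (∑ i ∈ Finset.Ico j1 j2, b i) ≠ 0 ∧
      ∀ m ∈ (∑ i ∈ Finset.Ico j1 j2, b i).support, N < m := by
  obtain ⟨x, y, hxy, hfeq⟩ := Finite.exists_ne_map_eq_of_infinite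
    (fun j : ℕ => fun m : Fin (N + 1) => (∑ i ∈ Finset.Ico 0 j, b i) (m : ℕ))
  wlog hlt : x < y generalizing x y
  · exact this y x hxy.symm hfeq.symm (by omega)
  refine ⟨x, y, hlt, hb _ (Finset.nonempty_Ico.2 hlt), ?_⟩
  intro m hm
  by_contra hNm
  have hmN : m < N + 1 := by omega
  have hsplit : (∑ i ∈ Finset.Ico 0 x, b i) + (∑ i ∈ Finset.Ico x y, b i)
      = ∑ i ∈ Finset.Ico 0 y, b i :=
    Finset.sum_Ico_consecutive _ (Nat.zero_le x) (le_of_lt hlt)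
  have h1 : (∑ i ∈ Finset.Ico 0 x, b i) m = (∑ i ∈ Finset.Ico 0 y, b i) m :=
    congrFun hfeq ⟨m, hmN⟩
  have h2 : (∑ i ∈ Finset.Ico 0 x, b i) m + (∑ i ∈ Finset.Ico x y, b i) m
      = (∑ i ∈ Finset.Ico 0 y, b i) m := by
    rw [← Finsupp.add_apply, hsplit]
  have : (∑ i ∈ Finset.Ico x y, b i) m = 0 := by
    rw [h1] at h2
    exact add_eq_left.mp h2
  exact (Finsupp.mem_support_iff.1 hm) this

/-- The key Hindman-type dichotomy over `𝔽₂`. -/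
lemma key_dichotomy (C : ℕ → E2) (hC : IsBlockSeq C) (Y : Set E2) :
    ∃ D : ℕ → E2, IsBlockSeq D ∧ SeqLe D C ∧ (SpanSub D Y ∨ SpanSub D Yᶜ) := by
  classical
  set a : Stream' E2 := C with ha
  -- every element of FS a is a nonzero element of the span of C
  have hFSa : ∀ x ∈ Hindman.FS a, x ∈ spanSeq C ∧ x ≠ 0 := by
    intro x hx
    obtain ⟨F, hF, hsum⟩ := FS_exists_finset hx
    constructor
    · rw [hsum]
      exact Submodule.sum_mem _ fun i _ => Submodule.subset_span ⟨i, rfl⟩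
    · rw [hsum]; exact blockSeq_sum_ne_zero hC hF
  -- Hindman's theorem
  obtain ⟨c, hc, b, hFSb⟩ := Hindman.FS_partition_regular a
    {Y ∩ Hindman.FS a, Yᶜ ∩ Hindman.FS a} (Set.toFinite _)
    (by intro x hx
        by_cases hY : x ∈ Y
        · exact ⟨Y ∩ Hindman.FS a, Set.mem_insert _ _, hY, hx⟩
        · exact ⟨Yᶜ ∩ Hindman.FS a, Set.mem_insert_of_mem _ rfl, hY, hx⟩)
  set bb : ℕ → E2 := fun i => b.get i with hbb
  have hcFS : c ⊆ Hindman.FS a := by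
    rcases hc with h | h
    · rw [h]; exact Set.inter_subset_right
    · rw [Set.mem_singleton_iff.1 h]; exact Set.inter_subset_right
  have hb : ∀ F : Finset ℕ, F.Nonempty → (∑ i ∈ F, bb i) ≠ 0 := by
    intro F hF
    exact (hFSa _ (hcFS (hFSb (Hindman.FS.finset_sum b F hF)))).2
  have hbspan : ∀ i, bb i ∈ spanSeq C := fun i =>
    (hFSa _ (hcFS (hFSb (Hindman.FS.singleton b i)))).1
  -- build the block sequence by repeated pigeonhole
  choose j1f j2f hjlt hjne hjsupp using exists_hi_support bb hb
  let step : ℕ × ℕ → ℕ × ℕ := fun p =>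
    let N := (∑ i ∈ Finset.Ico p.1 p.2, bb i).support.sup id
    (j1f N, j2f N)
  let ivl : ℕ → ℕ × ℕ := fun m => Nat.rec (j1f 0, j2f 0) (fun _ p => step p) m
  let D : ℕ → E2 := fun m => ∑ i ∈ Finset.Ico (ivl m).1 (ivl m).2, bb i
  have hform : ∀ m, ∃ N, ivl m = (j1f N, j2f N) := by
    intro m
    cases m with
    | zero => exact ⟨0, rfl⟩
    | succ n => exact ⟨_, rfl⟩
  have hDne : ∀ m, D m ≠ 0 := by
    intro m
    obtain ⟨N, hN⟩ := hform m
    show (∑ i ∈ Finset.Ico (ivl m).1 (ivl m).2, bb i) ≠ 0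
    rw [hN]
    exact hjne N
  have hDsupp : ∀ m, ∀ q ∈ (D (m + 1)).support,
      (D m).support.sup id < q := by
    intro m q hq
    have : D (m + 1) = ∑ i ∈ Finset.Ico (j1f ((D m).support.sup id))
        (j2f ((D m).support.sup id)), bb i := rfl
    rw [this] at hq
    exact hjsupp _ q hq
  have hsupmono : ∀ m, (D m).support.sup id < (D (m + 1)).support.sup id := by
    intro m
    obtain ⟨q, hq⟩ := Finsupp.support_nonempty_iff.2 (hDne (m + 1))
    exact lt_of_lt_of_le (hDsupp m q hq) (Finset.le_sup (f := id) hq)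
  have hsupmono' : StrictMono fun m => (D m).support.sup id :=
    strictMono_nat_of_lt_succ hsupmono
  have hblock : IsBlockSeq D := by
    refine ⟨hDne, fun m n hmn => ?_⟩
    intro p hp q hq
    obtain ⟨k, rfl⟩ : ∃ k, n = k + 1 := ⟨n - 1, by omega⟩
    have h1 : p ≤ (D m).support.sup id := Finset.le_sup (f := id) hp
    have h2 : (D m).support.sup id ≤ (D k).support.sup id :=
      hsupmono'.monotone (by omega)
    exact lt_of_le_of_lt (le_trans h1 h2) (hDsupp k q hq)
  have hDspanb : ∀ m, D m ∈ Submodule.span (ZMod 2) (Set.range bb) := fun m =>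
    Submodule.sum_mem _ fun i _ => Submodule.subset_span ⟨i, rfl⟩
  have hDle : SeqLe D C := by
    rw [SeqLe, spanSeq, Submodule.span_le]
    rintro _ ⟨m, rfl⟩
    exact Submodule.sum_mem _ fun i _ => hbspan i
  have hspan : ∀ x ∈ spanSeq D, x ≠ 0 → x ∈ c := by
    intro x hx hx0
    have hxb : x ∈ Submodule.span (ZMod 2) (Set.range bb) := by
      refine Submodule.span_le.2 ?_ hx
      rintro _ ⟨m, rfl⟩
      exact hDspanb m
    obtain ⟨F, hF, hsum⟩ := mem_span_zmod2 hxb hx0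
    rw [hsum]
    exact hFSb (Hindman.FS.finset_sum b F hF)
  refine ⟨D, hblock, hDle, ?_⟩
  rcases hc with h | h
  · left; intro x hx hx0; exact ((h ▸ hspan x hx hx0) : x ∈ Y ∩ _).1
  · right; intro x hx hx0
    exact ((Set.mem_singleton_iff.1 h ▸ hspan x hx hx0) : x ∈ Yᶜ ∩ _).1

end Aux

/-- over `𝔽₂`, a semicoideal is full iff it is a coideal. -/
theorem statement1 (H : Set (ℕ → EVec (ZMod 2))) (hH : Semicoideal H) :
    FullFam H ↔ CoidealFam H := by
  constructor
  · intro hfull Y A hA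
    by_cases hd : HDense H Y A
    · obtain ⟨B, hB, hBY⟩ := hfull Y A hA hd
      exact ⟨B, hB, Or.inl hBY⟩
    · rw [HDense] at hd; push_neg at hd
      obtain ⟨B, hB, hBno⟩ := hd
      obtain ⟨hBH, hBA⟩ := hB
      have hdc : HDense H Yᶜ B := by
        intro B' hB'
        obtain ⟨hB'H, hB'B⟩ := hB'
        obtain ⟨D, hDb, hDle, hDor⟩ := key_dichotomy B' (hH.1 B' hB'H) Y
        rcases hDor with hY | hYc
        · exact absurd hY (hBno D hDb (le_trans hDle hB'B))
        · exact ⟨D, hDb, hDle, hYc⟩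
      obtain ⟨B'', hB'', hB''Y⟩ := hfull Yᶜ B hBH hdc
      exact ⟨B'', ⟨hB''.1, le_trans hB''.2 hBA⟩, Or.inr hB''Y⟩
  · intro hcoid Y A hA hdense
    obtain ⟨B, hB, hor⟩ := hcoid Y A hA
    rcases hor with hY | hYc
    · exact ⟨B, hB, hY⟩
    · obtain ⟨C, hCb, hCB, hCY⟩ := hdense B hB
      have h0 : C 0 ≠ 0 := hCb.1 0
      have hmem : C 0 ∈ spanSeq C := Submodule.subset_span ⟨0, rfl⟩
      exact absurd (hCY _ hmem h0) (hYc _ (hCB hmem) h0)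
end
end

section
/- Let H ⊆ E^[∞] be a semicoideal satisfying the (q)-property, and let (A_n)_{n<ω} be a ≤-decreasing sequence in H. If B ∈ H↾A₀ weakly diagonalises (A_n)_{n<ω} (i.e. B ≤ A₀ and B ≤* A_n for all n), then there exists C ∈ H↾B which diagonalises (A_n)_{n<ω} within A₀, i.e. C/n ≤ A_{d_{A₀}(r_n(C))} for all n < ω. -/
noncomputable section

variable {𝔽 : Type} [Field 𝔽]

lemma seqLe_refl (X : ℕ → EVec 𝔽) : SeqLe X X := le_refl _

lemma seqLe_trans {X Y Z : ℕ → EVec 𝔽} (h1 : SeqLe X Y) (h2 : SeqLe Y Z) : SeqLe X Z :=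
  le_trans h1 h2

lemma seqLe_tail_tail (X : ℕ → EVec 𝔽) {N h : ℕ} (hNh : N ≤ h) :
    SeqLe (tailSeq X h) (tailSeq X N) := by
  apply Submodule.span_mono
  rintro _ ⟨k, rfl⟩
  exact ⟨k + (h - N), by simp only [tailSeq]; congr 1; omega⟩

lemma seqLe_as_antitone (As : ℕ → ℕ → EVec 𝔽) (hdec : ∀ n, SeqLe (As (n + 1)) (As n))
    {i j : ℕ} (hij : i ≤ j) : SeqLe (As j) (As i) := by
  induction j with
  | zero => simpa [Nat.le_zero.mp hij] using seqLe_refl (As 0)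
  | succ j ih =>
    rcases Nat.lt_or_ge i (j + 1) with h | h
    · exact seqLe_trans (hdec j) (ih (Nat.lt_succ_iff.mp h))
    · have : i = j + 1 := le_antisymm hij h
      simpa [this] using seqLe_refl (As (j + 1))

lemma blockLt_of_mem_spanList {b : List (EVec 𝔽)} {x v : EVec 𝔽}
    (hx : x ∈ spanList b) (h : ∀ y ∈ b, BlockLt y v) : BlockLt x v := by
  induction hx using Submodule.span_induction with
  | mem z hz => exact h z hz
  | zero => intro i hi; simp at hi
  | add z w _ _ hz hw =>
    intro i hi j hj
    rcases Finset.mem_union.mp (Finsupp.support_add hi) with h' | h'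
    · exact hz i h' j hj
    · exact hw i h' j hj
  | smul c z _ hz =>
    intro i hi j hj
    exact hz i (Finsupp.support_smul hi) j hj

lemma support_lower {A : ℕ → EVec 𝔽} (hA : IsBlockSeq A) :
    ∀ k, ∀ j ∈ (A k).support, k ≤ j := by
  intro k
  induction k with
  | zero => intro j _; exact Nat.zero_le j
  | succ k ih =>
    intro j hj
    obtain ⟨i, hi⟩ := Finsupp.support_nonempty_iff.mpr (hA.1 k)
    have := hA.2 k (k + 1) (Nat.lt_succ_self k) i hi j hj
    have := ih i hi
    omega

lemma depth_set_nonempty {A : ℕ → EVec 𝔽} (hA : IsBlockSeq A) (b : List (EVec 𝔽)) :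
    {N | ∀ x ∈ b, ∀ k, N ≤ k → BlockLt x (A k)}.Nonempty := by
  induction b with
  | nil => exact ⟨0, by simp⟩
  | cons x b ih =>
    obtain ⟨N, hN⟩ := ih
    refine ⟨max N (x.support.sup id + 1), ?_⟩
    intro y hy k hk
    rcases List.mem_cons.mp hy with rfl | hy
    · intro i hi j hj
      have h1 : i ≤ y.support.sup id := Finset.le_sup (f := id) hi
      have h2 : k ≤ j := support_lower hA k j hj
      omega
    · exact hN y hy k (le_trans (le_max_left _ _) hk)

lemma depthIn_le_of_span {A : ℕ → EVec 𝔽} (hA : IsBlockSeq A) {a b : List (EVec 𝔽)}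
    (h : ∀ x ∈ a, x ∈ spanList b) : depthIn A a ≤ depthIn A b := by
  have hmem := Nat.sInf_mem (depth_set_nonempty hA b)
  apply Nat.sInf_le
  intro x hx k hk
  exact blockLt_of_mem_spanList (h x hx) (fun y hy => hmem y hy k hk)

/-- in a (q)-semicoideal, a weak diagonalisation of a `≤`-decreasing
sequence can be refined to a diagonalisation within `A₀`. -/
theorem statement2 [Countable 𝔽] (H : Set (ℕ → EVec 𝔽)) (hH : Semicoideal H)
    (hq : QProp H)
    (As : ℕ → ℕ → EVec 𝔽) (hmem : ∀ n, As n ∈ H)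
    (hdec : ∀ n, SeqLe (As (n + 1)) (As n))
    (B : ℕ → EVec 𝔽) (hB : B ∈ H) (hBle : SeqLe B (As 0))
    (hweak : ∀ n, SeqLeStar B (As n)) :
    ∃ C ∈ H, SeqLe C B ∧ DiagWithin (As 0) As C := by
  have hA0 : IsBlockSeq (As 0) := hH.1 (As 0) (hmem 0)
  -- choice of tails witnessing `B ≤* As d`
  let Nf : ℕ → ℕ := fun d => (hweak d).choose
  have hNf : ∀ d, SeqLe (tailSeq B (Nf d)) (As d) := fun d => (hweak d).choose_spec
  -- intervals
  let hiOf : ℕ → ℕ := fun l => max l (Nf (depthIn (As 0) (rApprox B (l - 1))))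
  let lo : ℕ → ℕ := fun m => Nat.rec 1 (fun _ prev => hiOf prev + 1) m
  let hi : ℕ → ℕ := fun m => hiOf (lo m)
  have hlohi : ∀ m, lo m ≤ hi m := fun m => le_max_left _ _
  have hsucc : ∀ m, lo (m + 1) = hi m + 1 := fun m => rfl
  obtain ⟨C, hC, hdiag⟩ := hq B hB lo hi hlohi (fun m => by rw [hsucc m]; omega)
  refine ⟨C, hC.1, hC.2, seqLe_trans hC.2 hBle, ?_⟩
  intro n
  obtain ⟨m, hspan, htail⟩ := hdiag n
  set dm := depthIn (As 0) (rApprox B (lo m - 1)) with hdm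
  -- depth bound
  have hdepth : depthIn (As 0) (rApprox C n) ≤ dm := by
    apply depthIn_le_of_span hA0
    intro x hx
    exact hspan (Submodule.subset_span hx)
  -- tail chain
  have h1 : SeqLe (tailSeq B (hi m)) (tailSeq B (Nf dm)) :=
    seqLe_tail_tail B (le_max_right _ _)
  have h2 : SeqLe (tailSeq C n) (As dm) :=
    seqLe_trans htail (seqLe_trans h1 (hNf dm))
  exact seqLe_trans h2 (seqLe_as_antitone As hdec hdepth)
end
end

section
/- Let H ⊆ E^[∞] be a semicoideal. Then H is selective if and only if H satisfies both the (p)-property and the (q)-property. -/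
noncomputable section

variable {𝔽 : Type} [Field 𝔽]

section AuxLemmas

lemma mem_spanSeq (A : ℕ → EVec 𝔽) (n : ℕ) : A n ∈ spanSeq A :=
  Submodule.subset_span ⟨n, rfl⟩

lemma seqLe_of_forall {C D : ℕ → EVec 𝔽} (h : ∀ n, C n ∈ spanSeq D) : SeqLe C D :=
  Submodule.span_le.2 (by rintro _ ⟨n, rfl⟩; exact h n)

lemma tail_le_self (A : ℕ → EVec 𝔽) (N : ℕ) : SeqLe (tailSeq A N) A :=
  seqLe_of_forall fun n => mem_spanSeq A (n + N)

lemma tail_le_tail (A : ℕ → EVec 𝔽) {N M : ℕ} (h : N ≤ M) :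
    SeqLe (tailSeq A M) (tailSeq A N) := by
  apply seqLe_of_forall
  intro n
  have e : tailSeq A M n = tailSeq A N (n + (M - N)) := by
    show A (n + M) = A (n + (M - N) + N)
    congr 1; omega
  rw [e]; exact mem_spanSeq _ _

lemma isBlockSeq_tail {A : ℕ → EVec 𝔽} (hA : IsBlockSeq A) (N : ℕ) :
    IsBlockSeq (tailSeq A N) :=
  ⟨fun n => hA.1 _, fun m n h => hA.2 _ _ (by omega)⟩

lemma tail_mem {H : Set (ℕ → EVec 𝔽)} (hH : Semicoideal H) {A : ℕ → EVec 𝔽}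
    (hA : A ∈ H) (N : ℕ) : tailSeq A N ∈ H :=
  hH.2 A hA _ (isBlockSeq_tail (hH.1 A hA) N) ⟨N, le_rfl⟩

lemma supp_nonempty {A : ℕ → EVec 𝔽} (hA : IsBlockSeq A) (k : ℕ) :
    (A k).support.Nonempty :=
  Finsupp.support_nonempty_iff.2 (hA.1 k)

lemma exists_supp_ge {A : ℕ → EVec 𝔽} (hA : IsBlockSeq A) :
    ∀ k, ∃ j ∈ (A k).support, k ≤ j := by
  intro k
  induction k with
  | zero =>
    obtain ⟨j, hj⟩ := supp_nonempty hA 0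
    exact ⟨j, hj, Nat.zero_le _⟩
  | succ k ih =>
    obtain ⟨j, hj, hkj⟩ := ih
    obtain ⟨j', hj'⟩ := supp_nonempty hA (k + 1)
    exact ⟨j', hj', by have := hA.2 k (k + 1) (Nat.lt_succ_self k) j hj j' hj'; omega⟩

lemma mem_supp_ge {A : ℕ → EVec 𝔽} (hA : IsBlockSeq A) {k j : ℕ}
    (hj : j ∈ (A k).support) : k ≤ j := by
  rcases Nat.eq_zero_or_pos k with rfl | hk
  · exact Nat.zero_le _
  · obtain ⟨j0, hj0, h0⟩ := exists_supp_ge hA (k - 1)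
    have := hA.2 (k - 1) k (by omega) j0 hj0 j hj
    omega

lemma depthSet_nonempty {A : ℕ → EVec 𝔽} (hA : IsBlockSeq A) (a : List (EVec 𝔽)) :
    {N | ∀ x ∈ a, ∀ k, N ≤ k → BlockLt x (A k)}.Nonempty := by
  classical
  refine ⟨a.toFinset.sup (fun x => x.support.sup id) + 1, ?_⟩
  intro x hx k hk i hi j hj
  have h1 : i ≤ a.toFinset.sup (fun x => x.support.sup id) :=
    le_trans (Finset.le_sup (f := id) hi)
      (Finset.le_sup (f := fun x : EVec 𝔽 => x.support.sup id) (List.mem_toFinset.2 hx))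
  have h2 : k ≤ j := mem_supp_ge hA hj
  omega

lemma depthIn_mem {A : ℕ → EVec 𝔽} (hA : IsBlockSeq A) (a : List (EVec 𝔽)) :
    ∀ x ∈ a, ∀ k, depthIn A a ≤ k → BlockLt x (A k) :=
  Nat.sInf_mem (depthSet_nonempty hA a)

lemma depthIn_le {A : ℕ → EVec 𝔽} {a : List (EVec 𝔽)} {N : ℕ}
    (h : ∀ x ∈ a, ∀ k, N ≤ k → BlockLt x (A k)) : depthIn A a ≤ N :=
  Nat.sInf_le h

lemma mem_span_rApprox {A : ℕ → EVec 𝔽} (hA : IsBlockSeq A) {x : EVec 𝔽}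
    (hx : x ∈ spanSeq A) {d : ℕ} (hd : ∀ k, d ≤ k → BlockLt x (A k)) :
    x ∈ spanList (rApprox A d) := by
  rw [spanSeq, Finsupp.mem_span_range_iff_exists_finsupp] at hx
  obtain ⟨c, hc⟩ := hx
  have hsupp : ∀ j ∈ c.support, j < d := by
    intro j hj
    by_contra hjd
    push_neg at hjd
    obtain ⟨i, hi⟩ := supp_nonempty hA j
    have hxi : x i = c j * (A j) i := by
      rw [← hc, Finsupp.sum, Finsupp.finset_sum_apply,
        Finset.sum_eq_single j ?h0 ?h1]
      · simp
      case h0 =>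
        intro j' _ hne
        have hz : (A j') i = 0 := by
          by_contra h0
          have hi' : i ∈ (A j').support := Finsupp.mem_support_iff.2 h0
          rcases lt_or_gt_of_ne hne with h | h
          · exact absurd (hA.2 j' j h i hi' i hi) (lt_irrefl i)
          · exact absurd (hA.2 j j' h i hi i hi') (lt_irrefl i)
        simp [hz]
      case h1 =>
        intro hj0; exact absurd hj hj0
    have hxi0 : x i ≠ 0 :=
      hxi ▸ mul_ne_zero (Finsupp.mem_support_iff.1 hj) (Finsupp.mem_support_iff.1 hi)
    exact absurd (hd j hjd i (Finsupp.mem_support_iff.2 hxi0) i hi) (lt_irrefl i)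
  rw [← hc, Finsupp.sum]
  apply Submodule.sum_mem
  intro j hj
  exact Submodule.smul_mem _ _ (Submodule.subset_span
    (List.mem_map.2 ⟨j, List.mem_range.2 (hsupp j hj), rfl⟩))

lemma support_of_mem_spanList {a : List (EVec 𝔽)} {x : EVec 𝔽}
    (hx : x ∈ spanList a) : ∀ i ∈ x.support, ∃ y ∈ a, i ∈ y.support := by
  induction hx using Submodule.span_induction with
  | mem y hy => exact fun i hi => ⟨y, hy, hi⟩
  | zero => simp
  | add y z _ _ hy hz =>
    intro i hi
    rcases Finset.mem_union.1 (Finsupp.support_add hi) with h | h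
    · exact hy i h
    · exact hz i h
  | smul c y _ hy =>
    intro i hi
    exact hy i (Finsupp.support_smul hi)

lemma chain_le {As : ℕ → ℕ → EVec 𝔽} (hdec : ∀ n, SeqLe (As (n + 1)) (As n)) :
    ∀ {m d : ℕ}, m ≤ d → SeqLe (As d) (As m) := by
  intro m d h
  induction d, h using Nat.le_induction with
  | base => exact le_rfl
  | succ d _ ih => exact le_trans (hdec d) ih

lemma spanList_rApprox_mono (A : ℕ → EVec 𝔽) {d d' : ℕ} (h : d ≤ d') :
    spanList (rApprox A d) ≤ spanList (rApprox A d') := by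
  apply Submodule.span_mono
  intro y hy
  simp only [Set.mem_setOf_eq, rApprox, List.mem_map, List.mem_range] at *
  obtain ⟨j, hj, rfl⟩ := hy
  exact ⟨j, by omega, rfl⟩

end AuxLemmas

/-- a semicoideal is selective iff it has both the (p)-property and
the (q)-property. -/
theorem statement3 [Countable 𝔽] (H : Set (ℕ → EVec 𝔽)) (hH : Semicoideal H) :
    SelectiveFam H ↔ PProp H ∧ QProp H := by
  constructor
  · intro hsel
    constructor
    · -- (p)-property
      intro As hAs hdec
      obtain ⟨B, hBH, hBle, hdiag⟩ := hsel (As 0) (hAs 0) As hAs hdec le_rfl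
      refine ⟨B, hBH, hBle, ?_⟩
      intro m
      have hAblock : IsBlockSeq (As 0) := hH.1 _ (hAs 0)
      have hBblock : IsBlockSeq B := hH.1 B hBH
      have hex : ∃ n, m ≤ depthIn (As 0) (rApprox B n) := by
        by_contra h
        push_neg at h
        obtain ⟨j0, hj0⟩ := supp_nonempty hAblock m
        obtain ⟨i0, hi0, hji0⟩ := exists_supp_ge hBblock j0
        have hmem := depthIn_mem hAblock (rApprox B (j0 + 1)) (B j0)
          (List.mem_map.2 ⟨j0, List.mem_range.2 (Nat.lt_succ_self _), rfl⟩)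
          m (le_of_lt (h (j0 + 1)))
        have := hmem i0 hi0 j0 hj0
        omega
      obtain ⟨n, hn⟩ := hex
      exact ⟨n, le_trans (hdiag n) (chain_le hdec hn)⟩
    · -- (q)-property
      intro A hA lo hi hlohi hhilo
      have hlomono : StrictMono lo :=
        strictMono_nat_of_lt_succ fun m => lt_of_le_of_lt (hlohi m) (hhilo m)
      have hhimono : ∀ m, hi m ≤ hi (m + 1) :=
        fun m => le_trans (le_of_lt (hhilo m)) (hlohi (m + 1))
      set As : ℕ → ℕ → EVec 𝔽 := fun n => tailSeq A (hi (n + 1)) with hAsdef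
      have hAs : ∀ n, As n ∈ H := fun n => tail_mem hH hA _
      have hdec : ∀ n, SeqLe (As (n + 1)) (As n) :=
        fun n => tail_le_tail A (hhimono (n + 1))
      obtain ⟨B, hBH, hBA, hdiag⟩ := hsel A hA As hAs hdec (tail_le_self A _)
      refine ⟨B, ⟨hBH, hBA⟩, ?_⟩
      intro n
      set d := depthIn A (rApprox B n) with hdd
      refine ⟨d + 1, ?_, hdiag n⟩
      have hstep : spanList (rApprox B n) ≤ spanList (rApprox A d) := by
        apply Submodule.span_le.2
        intro x hx
        have hx' : x ∈ rApprox B n := hx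
        obtain ⟨j, -, rfl⟩ := List.mem_map.1 hx'
        exact mem_span_rApprox (hH.1 A hA) (hBA (mem_spanSeq B j))
          (fun k hk => depthIn_mem (hH.1 A hA) (rApprox B n) _ hx' k hk)
      refine le_trans hstep (spanList_rApprox_mono A ?_)
      have := hlomono.le_apply (x := d + 1)
      omega
  · rintro ⟨hp, hq⟩
    intro A hA As hAs hdec h0
    obtain ⟨B0, hB0H, hB0le, hwd⟩ := hp As hAs hdec
    choose N hN using hwd
    classical
    set Δ : ℕ → ℕ := fun l => depthIn A (rApprox B0 (l - 1)) with hΔdef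
    set lo : ℕ → ℕ := fun m => Nat.rec 0 (fun _ l => max l (N (Δ l)) + 1) m with hlodef
    set hi : ℕ → ℕ := fun m => max (lo m) (N (Δ (lo m))) with hhidef
    have hlosucc : ∀ m, lo (m + 1) = hi m + 1 := fun m => rfl
    obtain ⟨B, hBmem, hB⟩ := hq B0 hB0H lo hi
      (fun m => le_max_left _ _) (fun m => by rw [hlosucc]; exact Nat.lt_succ_self _)
    obtain ⟨hBH, hBB0⟩ := hBmem
    refine ⟨B, hBH, le_trans hBB0 (le_trans hB0le h0), ?_⟩
    intro n
    obtain ⟨m, h1, h2⟩ := hB n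
    have hδmem := depthIn_mem (hH.1 A hA) (rApprox B0 (lo m - 1))
    have hd : depthIn A (rApprox B n) ≤ Δ (lo m) := by
      apply depthIn_le
      intro x hx k hk i hi' j hj
      obtain ⟨y, hy, hiy⟩ :=
        support_of_mem_spanList (h1 (Submodule.subset_span hx)) i hi'
      exact hδmem y hy k hk i hiy j hj
    refine le_trans h2 (le_trans (tail_le_tail B0 (le_max_right (lo m) _))
      (le_trans (hN (Δ (lo m))) (chain_le hdec hd)))
end
end

section
/- Let (V_n)_{n<ω} be a countable family of pairwise almost disjoint infinite-dimensional subspaces of E. Then there exists an infinite-dimensional subspace W ⊆ E such that W ∩ V_n is finite-dimensional for every n. Consequently, every infinite maximal almost disjoint family of infinite-dimensional subspaces of E is uncountable (ℵ₁ ≤ 𝔞*_{vec,𝔽}). -/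
noncomputable section

variable {𝔽 : Type} [Field 𝔽]

section Statement4Aux

variable {M N : Type} [AddCommGroup M] [Module 𝔽 M]
  [AddCommGroup N] [Module 𝔽 N]

lemma aux_findim_of_ker_range (f : M →ₗ[𝔽] N)
    (h1 : FiniteDimensional 𝔽 (LinearMap.ker f))
    (h2 : FiniteDimensional 𝔽 (LinearMap.range f)) : FiniteDimensional 𝔽 M := by
  have hr : Module.rank 𝔽 M < Cardinal.aleph0 := by
    rw [← LinearMap.rank_range_add_rank_ker f]
    exact Cardinal.add_lt_aleph0 (Module.rank_lt_aleph0_iff.mpr h2)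
      (Module.rank_lt_aleph0_iff.mpr h1)
  exact Module.rank_lt_aleph0_iff.mp hr

lemma aux_quot_infdim (V W : Submodule 𝔽 M) (hW : ¬ FiniteDimensional 𝔽 W)
    (hVW : FiniteDimensional 𝔽 ↥(V ⊓ W)) : ¬ FiniteDimensional 𝔽 (M ⧸ V) := by
  intro h
  refine hW (aux_findim_of_ker_range (V.mkQ ∘ₗ W.subtype) ?_ inferInstance)
  have hker : LinearMap.ker (V.mkQ ∘ₗ W.subtype) = Submodule.comap W.subtype (V ⊓ W) := by
    ext x
    simp [LinearMap.mem_ker, Submodule.Quotient.mk_eq_zero, x.2]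
  rw [hker]
  exact (Submodule.comapSubtypeEquivOfLe (inf_le_right : V ⊓ W ≤ W)).symm.finiteDimensional

lemma aux_quot_sup (U F : Submodule 𝔽 M) (hU : ¬ FiniteDimensional 𝔽 (M ⧸ U))
    (hF : FiniteDimensional 𝔽 F) : ¬ FiniteDimensional 𝔽 (M ⧸ (U ⊔ F : Submodule 𝔽 M)) := by
  intro h
  have hle : U ≤ LinearMap.ker (U ⊔ F).mkQ := by
    rw [Submodule.ker_mkQ]; exact le_sup_left
  refine hU (aux_findim_of_ker_range (Submodule.liftQ U (U ⊔ F).mkQ hle) ?_ ?_)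
  · rw [Submodule.ker_liftQ, Submodule.ker_mkQ, Submodule.map_sup, Submodule.mkQ_map_self,
      bot_sup_eq]
    haveI := hF
    exact Module.Finite.map F U.mkQ
  · rw [Submodule.range_liftQ, Submodule.range_mkQ]
    infer_instance

lemma aux_exists_avoid (n : ℕ) (U : ℕ → Submodule 𝔽 M)
    (h : ∀ i, i ≤ n → ¬ FiniteDimensional 𝔽 (M ⧸ U i)) : ∃ x : M, ∀ i ≤ n, x ∉ U i := by
  by_contra hc
  push_neg at hc
  have hcov : ⋃ i ∈ Finset.range (n + 1), ((U i : Set M)) = Set.univ := by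
    ext x
    simp only [Set.mem_iUnion, Set.mem_univ, iff_true, Finset.mem_range]
    obtain ⟨i, hi, hx⟩ := hc x
    exact ⟨i, by omega, hx⟩
  obtain ⟨k, hk, hfk⟩ := Submodule.exists_finiteIndex_of_cover hcov
  haveI := hfk
  haveI : Finite (M ⧸ U k) := AddSubgroup.finite_quotient_of_finiteIndex
  exact h k (Nat.lt_succ_iff.mp (Finset.mem_range.mp hk)) inferInstance

lemma aux_span_zero (v : ℕ → M) (U : Submodule 𝔽 M)
    (h : ∀ n, v n ∉ U ⊔ Submodule.span 𝔽 (v '' Set.Iio n)) :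
    ∀ x ∈ Submodule.span 𝔽 (Set.range v), x ∈ U → x = 0 := by
  have key : ∀ n, ∀ x ∈ Submodule.span 𝔽 (v '' Set.Iio n), x ∈ U → x = 0 := by
    intro n
    induction n with
    | zero =>
      intro x hx _
      have : v '' Set.Iio 0 = ∅ := by simp [Set.eq_empty_iff_forall_notMem]
      rw [this, Submodule.span_empty, Submodule.mem_bot] at hx
      exact hx
    | succ n ih =>
      intro x hx hxU
      have himg : v '' Set.Iio (n + 1) = insert (v n) (v '' Set.Iio n) := by
        rw [show Set.Iio (n + 1) = insert n (Set.Iio n) by ext; simp,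
          Set.image_insert_eq]
      rw [himg, Submodule.mem_span_insert] at hx
      obtain ⟨a, z, hz, rfl⟩ := hx
      by_cases ha : a = 0
      · rw [ha, zero_smul, zero_add]
        rw [ha, zero_smul, zero_add] at hxU
        exact ih z hz hxU
      · exfalso
        apply h n
        have h1 : a • v n + z ∈ U ⊔ Submodule.span 𝔽 (v '' Set.Iio n) :=
          Submodule.mem_sup_left hxU
        have h2 : a • v n ∈ U ⊔ Submodule.span 𝔽 (v '' Set.Iio n) := by
          have := Submodule.sub_mem _ h1 (Submodule.mem_sup_right hz)
          simpa using this
        have h3 := Submodule.smul_mem _ a⁻¹ h2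
        rwa [inv_smul_smul₀ ha] at h3
  intro x hx hxU
  have hmono : Monotone (fun n => Submodule.span 𝔽 (v '' Set.Iio n)) := by
    intro a b hab
    exact Submodule.span_mono (Set.image_mono (Set.Iio_subset_Iio hab))
  have hsp : Submodule.span 𝔽 (Set.range v) = ⨆ n, Submodule.span 𝔽 (v '' Set.Iio n) := by
    apply le_antisymm
    · rw [Submodule.span_le]
      rintro _ ⟨k, rfl⟩
      have hk : v k ∈ Submodule.span 𝔽 (v '' Set.Iio (k + 1)) :=
        Submodule.subset_span ⟨k, by simp, rfl⟩
      exact Submodule.mem_iSup_of_mem (k + 1) hk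
    · exact iSup_le fun n => Submodule.span_mono (Set.image_subset_range _ _)
  rw [hsp] at hx
  obtain ⟨n, hn⟩ := (Submodule.mem_iSup_of_directed _ hmono.directed_le).mp hx
  exact key n x hn hxU

lemma aux_exists_ad (V : ℕ → Submodule 𝔽 (EVec 𝔽))
    (hinf : ∀ n, ¬ FiniteDimensional 𝔽 (V n))
    (had : ∀ m n, m ≠ n → FiniteDimensional 𝔽 ↥(V m ⊓ V n)) :
    ∃ W : Submodule 𝔽 (EVec 𝔽), ¬ FiniteDimensional 𝔽 W ∧
      ∀ n, FiniteDimensional 𝔽 ↥(W ⊓ V n) := by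
  have hq : ∀ i, ¬ FiniteDimensional 𝔽 (EVec 𝔽 ⧸ V i) := fun i =>
    aux_quot_infdim (V i) (V (i + 1)) (hinf (i + 1)) (had i (i + 1) (by omega))
  have key : ∀ (n : ℕ) (F : Submodule 𝔽 (EVec 𝔽)), ∃ x,
      FiniteDimensional 𝔽 F → ∀ i ≤ n, x ∉ V i ⊔ F := by
    intro n F
    by_cases hF : FiniteDimensional 𝔽 F
    · obtain ⟨x, hx⟩ := aux_exists_avoid n (fun i => V i ⊔ F)
        (fun i _ => aux_quot_sup (V i) F (hq i) hF)
      exact ⟨x, fun _ => hx⟩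
    · exact ⟨0, fun hh => absurd hh hF⟩
  choose step hstep using key
  let F : ℕ → Submodule 𝔽 (EVec 𝔽) := fun n =>
    Nat.rec (motive := fun _ => Submodule 𝔽 (EVec 𝔽)) ⊥ (fun m Fm => Fm ⊔ Submodule.span 𝔽 {step m Fm}) n
  let w : ℕ → EVec 𝔽 := fun n => step n (F n)
  have hFsucc : ∀ n, F (n + 1) = F n ⊔ Submodule.span 𝔽 {w n} := fun n => rfl
  have hFfin : ∀ n, FiniteDimensional 𝔽 (F n) := by
    intro n
    induction n with
    | zero => exact (inferInstance : FiniteDimensional 𝔽 (⊥ : Submodule 𝔽 (EVec 𝔽)))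
    | succ n ih =>
      rw [hFsucc]
      haveI := ih
      haveI := FiniteDimensional.span_of_finite 𝔽 (Set.finite_singleton (w n))
      infer_instance
  have hw : ∀ n, ∀ i ≤ n, w n ∉ V i ⊔ F n := fun n => hstep n (F n) (hFfin n)
  have hFmono : Monotone F :=
    monotone_nat_of_le_succ (fun n => by rw [hFsucc]; exact le_sup_left)
  have hFspan : ∀ n, F n = Submodule.span 𝔽 (w '' Set.Iio n) := by
    intro n
    induction n with
    | zero =>
      have : w '' Set.Iio 0 = ∅ := by simp [Set.eq_empty_iff_forall_notMem]
      rw [this, Submodule.span_empty]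
      rfl
    | succ n ih =>
      rw [hFsucc, ih,
        show Set.Iio (n + 1) = insert n (Set.Iio n) by ext; simp,
        Set.image_insert_eq, Submodule.span_insert]
      exact sup_comm _ _
  refine ⟨Submodule.span 𝔽 (Set.range w), ?_, ?_⟩
  · intro hW
    have hle : ∀ n, F n ≤ Submodule.span 𝔽 (Set.range w) := fun n => by
      rw [hFspan]; exact Submodule.span_mono (Set.image_subset_range _ _)
    have hlt : ∀ n, F n < F (n + 1) := by
      intro n
      refine lt_of_le_of_ne (hFmono (Nat.le_succ n)) (fun he => ?_)
      have hmem : w n ∈ F (n + 1) := by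
        rw [hFsucc]
        exact Submodule.mem_sup_right (Submodule.mem_span_singleton_self _)
      rw [← he] at hmem
      exact hw n 0 (Nat.zero_le n) (Submodule.mem_sup_right hmem)
    have hrank : ∀ n, n ≤ Module.finrank 𝔽 (F n) := by
      intro n
      induction n with
      | zero => exact Nat.zero_le _
      | succ n ih =>
        haveI := hFfin (n + 1)
        have := Submodule.finrank_lt_finrank_of_lt (hlt n)
        omega
    haveI := hW
    have hbd : ∀ n, Module.finrank 𝔽 (F n) ≤
        Module.finrank 𝔽 (Submodule.span 𝔽 (Set.range w)) := fun n =>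
      Submodule.finrank_mono (hle n)
    have h1 := hrank (Module.finrank 𝔽 (Submodule.span 𝔽 (Set.range w)) + 1)
    have h2 := hbd (Module.finrank 𝔽 (Submodule.span 𝔽 (Set.range w)) + 1)
    omega
  · intro i
    haveI := hFfin i
    apply Submodule.finiteDimensional_of_le
      (S₂ := F i)
    intro x hx
    obtain ⟨hxW, hxV⟩ := Submodule.mem_inf.mp hx
    have hWle : Submodule.span 𝔽 (Set.range w) ≤
        F i ⊔ Submodule.span 𝔽 (Set.range (fun k => w (k + i))) := by
      rw [Submodule.span_le]
      rintro _ ⟨n, rfl⟩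
      by_cases hn : n < i
      · exact Submodule.mem_sup_left (by rw [hFspan]; exact Submodule.subset_span ⟨n, hn, rfl⟩)
      · refine Submodule.mem_sup_right (Submodule.subset_span ⟨n - i, ?_⟩)
        simp [Nat.sub_add_cancel (not_lt.mp hn)]
    obtain ⟨f, hf, t, ht, hft⟩ := Submodule.mem_sup.mp (hWle hxW)
    have htU : t ∈ V i ⊔ F i := by
      have hte : t = x - f := by rw [← hft]; abel
      rw [hte]
      exact Submodule.sub_mem _ (Submodule.mem_sup_left hxV) (Submodule.mem_sup_right hf)
    have ht0 : t = 0 := by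
      refine aux_span_zero (fun k => w (k + i)) (V i ⊔ F i) ?_ t ht htU
      intro n hmem
      apply hw (n + i) i (Nat.le_add_left i n)
      have hsub : Submodule.span 𝔽 ((fun k => w (k + i)) '' Set.Iio n) ≤ F (n + i) := by
        rw [hFspan]
        apply Submodule.span_mono
        rintro _ ⟨k, hk, rfl⟩
        exact ⟨k + i, by simp at hk ⊢; omega, rfl⟩
      have hFi : F i ≤ F (n + i) := hFmono (Nat.le_add_left i n)
      have : (V i ⊔ F i) ⊔ Submodule.span 𝔽 ((fun k => w (k + i)) '' Set.Iio n) ≤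
          V i ⊔ F (n + i) :=
        sup_le (sup_le le_sup_left (hFi.trans le_sup_right)) (hsub.trans le_sup_right)
      exact this hmem
    rw [ht0, add_zero] at hft
    rw [← hft]
    exact hf

end Statement4Aux

/-- no countable almost disjoint family of infinite-dimensional subspaces
is maximal; consequently every infinite mad family of subspaces is uncountable. -/
theorem statement4 [Countable 𝔽] :
    (∀ V : ℕ → Submodule 𝔽 (EVec 𝔽),
       (∀ n, ¬ FiniteDimensional 𝔽 ↥(V n)) →
       (∀ m n, m ≠ n → FiniteDimensional 𝔽 ↥(V m ⊓ V n)) →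
       ∃ W : Submodule 𝔽 (EVec 𝔽), ¬ FiniteDimensional 𝔽 ↥W ∧
         ∀ n, FiniteDimensional 𝔽 ↥(W ⊓ V n)) ∧
    (∀ 𝒜 : Set (Submodule 𝔽 (EVec 𝔽)), 𝒜.Infinite →
       (∀ V ∈ 𝒜, ¬ FiniteDimensional 𝔽 ↥V) →
       (∀ V ∈ 𝒜, ∀ W ∈ 𝒜, V ≠ W → FiniteDimensional 𝔽 ↥(V ⊓ W)) →
       (∀ W : Submodule 𝔽 (EVec 𝔽), ¬ FiniteDimensional 𝔽 ↥W →
         ∃ V ∈ 𝒜, ¬ FiniteDimensional 𝔽 ↥(W ⊓ V)) →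
       ¬ 𝒜.Countable) := by
  constructor
  · intro V h1 h2
    exact aux_exists_ad V h1 h2
  · intro 𝒜 hAinf hdim hpair hmax hcount
    haveI := hcount.to_subtype
    haveI := hAinf.to_subtype
    haveI : Encodable ↥𝒜 := Encodable.ofCountable _
    haveI : Denumerable ↥𝒜 := Denumerable.ofEncodableOfInfinite _
    let e := Denumerable.eqv ↥𝒜
    set V : ℕ → Submodule 𝔽 (EVec 𝔽) := fun n => ((e.symm n : ↥𝒜) : Submodule 𝔽 (EVec 𝔽))
      with hV
    obtain ⟨W, hW1, hW2⟩ := aux_exists_ad V (fun n => hdim _ (e.symm n).2)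
      (fun m n hmn => hpair _ (e.symm m).2 _ (e.symm n).2
        (fun hh => hmn (e.symm.injective (Subtype.ext hh))))
    obtain ⟨Vx, hVx, hbad⟩ := hmax W hW1
    have hx : V (e ⟨Vx, hVx⟩) = Vx := by simp [hV]
    exact hbad (hx ▸ hW2 (e ⟨Vx, hVx⟩))
end
end

section
/- Let U, V, W be subspaces of a vector space E over a field 𝔽 such that V ∩ W is finite-dimensional and U is finite-dimensional. Then (U + V) ∩ W is finite-dimensional. -/
noncomputable section

variable {𝔽 : Type} [Field 𝔽]

/-- if `V ⊓ W` is finite-dimensional and `U` is finite-dimensional,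
then `(U + V) ⊓ W` is finite-dimensional. -/
theorem statement5 {K M : Type*} [Field K] [AddCommGroup M] [Module K M]
    (U V W : Submodule K M)
    (hVW : FiniteDimensional K ↥(V ⊓ W)) (hU : FiniteDimensional K ↥U) :
    FiniteDimensional K ↥((U ⊔ V) ⊓ W) := by
  set P := (U ⊔ V) ⊓ W with hP
  let f : ↥P →ₗ[K] M ⧸ V := V.mkQ.comp P.subtype
  have hkereq : LinearMap.ker f = Submodule.comap P.subtype (V ⊓ W) := by
    ext x
    simp only [LinearMap.mem_ker, Submodule.mem_comap, Submodule.mem_inf,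
      Submodule.subtype_apply, LinearMap.comp_apply, Submodule.mkQ_apply,
      Submodule.Quotient.mk_eq_zero, f]
    exact ⟨fun h => ⟨h, x.2.2⟩, fun h => h.1⟩
  have hVWP : V ⊓ W ≤ P := inf_le_inf_right W le_sup_right
  have hker : FiniteDimensional K ↥(LinearMap.ker f) := by
    rw [hkereq]
    exact Module.Finite.equiv (Submodule.comapSubtypeEquivOfLe hVWP).symm
  have hrange : FiniteDimensional K ↥(LinearMap.range f) := by
    have hle : LinearMap.range f ≤ LinearMap.range (V.mkQ.comp U.subtype) := by
      rintro _ ⟨x, rfl⟩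
      have hx : (x : M) ∈ U ⊔ V := x.2.1
      obtain ⟨u, hu, v, hv, huv⟩ := Submodule.mem_sup.mp hx
      refine ⟨⟨u, hu⟩, ?_⟩
      simp only [LinearMap.comp_apply, Submodule.subtype_apply, Submodule.mkQ_apply, f]
      rw [← huv]
      rw [Submodule.Quotient.eq]
      simpa using hv
    exact Submodule.finiteDimensional_of_le hle
  have := f.rank_range_add_rank_ker
  have hlt : Module.rank K ↥P < Cardinal.aleph0 := by
    rw [← this]
    exact Cardinal.add_lt_aleph0 (Module.rank_lt_aleph0_iff.mpr hrange)
      (Module.rank_lt_aleph0_iff.mpr hker)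
  exact IsNoetherian.iff_fg.mp (IsNoetherian.iff_rank_lt_aleph0.mpr hlt)
end
end

section
/- Let 𝒜 be a finite almost disjoint family of infinite-dimensional subspaces of E with |𝒜| > 1. Then 𝒜 is not maximal: there exists an infinite-dimensional subspace V ⊆ E with V ∩ W = {0} for every W ∈ 𝒜 (in particular, V is almost disjoint from every member of 𝒜 and V ∉ 𝒜). -/
noncomputable section

variable {𝔽 : Type} [Field 𝔽]

section Statement7Aux

variable {K M : Type*} [Field K] [AddCommGroup M] [Module K M]

/-- A finite family of subspaces, each of infinite codimension, cannot cover the space. -/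
lemma statement7_aux_cover (s : Finset (Submodule K M))
    (h : ∀ T ∈ s, ¬ FiniteDimensional K (M ⧸ T)) :
    ∃ v : M, ∀ T ∈ s, v ∉ T := by
  by_contra hc
  push_neg at hc
  have hcov : ⋃ T ∈ s, ((T : Submodule K M) : Set M) = Set.univ := by
    ext v
    simpa using hc v
  obtain ⟨T, hTs, hTfi⟩ :=
    Submodule.exists_finiteIndex_of_cover (p := fun T : Submodule K M => T) hcov
  haveI := hTfi
  haveI : Finite (M ⧸ T) := AddSubgroup.finite_quotient_of_finiteIndex
  exact h T hTs inferInstance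

/-- Adding a finite-dimensional subspace keeps the quotient infinite-dimensional. -/
lemma statement7_aux_quot_sup (W U : Submodule K M) (hW : ¬ FiniteDimensional K (M ⧸ W))
    (hU : FiniteDimensional K U) : ¬ FiniteDimensional K (M ⧸ (W ⊔ U)) := by
  intro hfd
  apply hW
  have e := Submodule.quotientQuotientEquivQuotientSup W U
  have h1 : Module.rank K ((M ⧸ W) ⧸ (U.map W.mkQ)) < Cardinal.aleph0 := by
    rw [e.rank_eq]; exact Module.rank_lt_aleph0_iff.mpr hfd
  have h2 : Module.rank K (U.map W.mkQ) < Cardinal.aleph0 :=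
    (rank_map_le _ _).trans_lt (Module.rank_lt_aleph0_iff.mpr hU)
  have h3 := rank_quotient_add_rank_of_divisionRing (K := K) (V := M ⧸ W) (U.map W.mkQ)
  refine Module.rank_lt_aleph0_iff.mp ?_
  calc Module.rank K (M ⧸ W)
      = Module.rank K ((M ⧸ W) ⧸ (U.map W.mkQ)) + Module.rank K (U.map W.mkQ) := h3.symm
    _ < Cardinal.aleph0 := Cardinal.add_lt_aleph0 h1 h2

/-- If `W'` is infinite dimensional and `W ⊓ W'` is finite dimensional, then `M ⧸ W` is
infinite dimensional. -/
lemma statement7_aux_codim (W W' : Submodule K M) (hW' : ¬ FiniteDimensional K W')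
    (hint : FiniteDimensional K ↥(W ⊓ W')) : ¬ FiniteDimensional K (M ⧸ W) := by
  intro hfd
  apply hW'
  set f : W' →ₗ[K] M ⧸ W := W.mkQ.comp W'.subtype with hf
  have hker : LinearMap.ker f = Submodule.comap W'.subtype (W ⊓ W') := by
    ext x
    simp [hf, Submodule.Quotient.mk_eq_zero, x.2]
  have hkerfd : FiniteDimensional K (LinearMap.ker f) := by
    rw [hker]
    exact Module.Finite.equiv (Submodule.comapSubtypeEquivOfLe inf_le_right).symm
  have hrangefd : FiniteDimensional K (LinearMap.range f) := inferInstance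
  have e := f.quotKerEquivRange
  have h3 := rank_quotient_add_rank_of_divisionRing (K := K) (V := W') (LinearMap.ker f)
  refine Module.rank_lt_aleph0_iff.mp ?_
  calc Module.rank K W'
      = Module.rank K (W' ⧸ LinearMap.ker f) + Module.rank K (LinearMap.ker f) := h3.symm
    _ < Cardinal.aleph0 := by
        apply Cardinal.add_lt_aleph0
        · rw [e.rank_eq]; exact Module.rank_lt_aleph0_iff.mpr hrangefd
        · exact Module.rank_lt_aleph0_iff.mpr hkerfd

end Statement7Aux

/-- The increasing chain of finite-dimensional subspaces generated by a choice
function `g`. -/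
def statement7Chain (g : Submodule 𝔽 (EVec 𝔽) → EVec 𝔽) : ℕ → Submodule 𝔽 (EVec 𝔽)
  | 0 => ⊥
  | n + 1 => statement7Chain g n ⊔ Submodule.span 𝔽 {g (statement7Chain g n)}

/-- a finite almost disjoint family of infinite-dimensional subspaces with
more than one member is not maximal: some infinite-dimensional subspace meets every
member trivially. -/
theorem statement7 [Countable 𝔽] (𝒜 : Set (Submodule 𝔽 (EVec 𝔽)))
    (hfin : 𝒜.Finite) (hcard : 1 < 𝒜.ncard)
    (hinf : ∀ V ∈ 𝒜, ¬ FiniteDimensional 𝔽 ↥V)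
    (had : ∀ V ∈ 𝒜, ∀ W ∈ 𝒜, V ≠ W → FiniteDimensional 𝔽 ↥(V ⊓ W)) :
    ∃ V : Submodule 𝔽 (EVec 𝔽), ¬ FiniteDimensional 𝔽 ↥V ∧
      ∀ W ∈ 𝒜, V ⊓ W = ⊥ := by
  classical
  -- every member of 𝒜 has infinite codimension
  have hquot : ∀ W ∈ 𝒜, ¬ FiniteDimensional 𝔽 (EVec 𝔽 ⧸ W) := by
    intro W hW
    obtain ⟨W', hW', hne⟩ := Set.exists_ne_of_one_lt_ncard hcard W
    exact statement7_aux_codim W W' (hinf W' hW') (had W hW W' hW' (Ne.symm hne))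
  obtain ⟨W₀, hW₀, -⟩ := Set.exists_ne_of_one_lt_ncard hcard ⊥
  -- key extension step: a finite-dimensional `U` can be extended avoiding every `W ⊔ U`
  have key : ∀ U : Submodule 𝔽 (EVec 𝔽), FiniteDimensional 𝔽 U →
      ∃ v, ∀ W ∈ 𝒜, v ∉ W ⊔ U := by
    intro U hU
    have hside : ∀ T ∈ hfin.toFinset.image (fun W => W ⊔ U),
        ¬ FiniteDimensional 𝔽 (EVec 𝔽 ⧸ T) := by
      intro T hT
      simp only [Finset.mem_image, Set.Finite.mem_toFinset] at hT
      obtain ⟨W, hW, rfl⟩ := hT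
      exact statement7_aux_quot_sup W U (hquot W hW) hU
    obtain ⟨v, hv⟩ := statement7_aux_cover (hfin.toFinset.image (fun W => W ⊔ U)) hside
    exact ⟨v, fun W hW => hv _ (Finset.mem_image_of_mem _ (hfin.mem_toFinset.mpr hW))⟩
  let g : Submodule 𝔽 (EVec 𝔽) → EVec 𝔽 := fun U =>
    if h : FiniteDimensional 𝔽 U then (key U h).choose else 0
  have hg : ∀ U : Submodule 𝔽 (EVec 𝔽), ∀ (h : FiniteDimensional 𝔽 U), ∀ W ∈ 𝒜, g U ∉ W ⊔ U := by
    intro U h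
    simp only [g, dif_pos h]
    exact (key U h).choose_spec
  set U : ℕ → Submodule 𝔽 (EVec 𝔽) := statement7Chain g with hUdef
  have hU0 : U 0 = ⊥ := rfl
  have hUs : ∀ n, U (n + 1) = U n ⊔ Submodule.span 𝔽 {g (U n)} := fun n => rfl
  have hfd : ∀ n, FiniteDimensional 𝔽 (U n) := by
    intro n
    induction n with
    | zero => exact hU0 ▸ inferInstanceAs (FiniteDimensional 𝔽 (⊥ : Submodule 𝔽 (EVec 𝔽)))
    | succ n ih =>
      rw [hUs]
      haveI := ih
      infer_instance
  have hvnotin : ∀ n, ∀ W ∈ 𝒜, g (U n) ∉ W ⊔ U n := fun n => hg _ (hfd n)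
  have hmono : Monotone U := monotone_nat_of_le_succ fun n => (hUs n) ▸ le_sup_left
  -- invariant: `U n ⊓ W = ⊥`
  have hdisj : ∀ n, ∀ W ∈ 𝒜, U n ⊓ W = ⊥ := by
    intro n
    induction n with
    | zero => intro W hW; rw [hU0, bot_inf_eq]
    | succ n ih =>
      intro W hW
      rw [eq_bot_iff]
      rintro x hx
      obtain ⟨hx1, hx2⟩ := Submodule.mem_inf.mp hx
      rw [hUs] at hx1
      obtain ⟨u, hu, z, hz, rfl⟩ := Submodule.mem_sup.mp hx1
      obtain ⟨c, rfl⟩ := Submodule.mem_span_singleton.mp hz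
      by_cases hc : c = 0
      · subst hc
        rw [zero_smul, add_zero] at hx2 ⊢
        have : u ∈ U n ⊓ W := Submodule.mem_inf.mpr ⟨hu, hx2⟩
        rw [ih W hW] at this
        exact this
      · exfalso
        apply hvnotin n W hW
        have hveq : g (U n) = c⁻¹ • (u + c • g (U n)) - c⁻¹ • u := by
          rw [smul_add, smul_smul, inv_mul_cancel₀ hc, one_smul]
          abel
        rw [hveq]
        exact Submodule.sub_mem _ (Submodule.mem_sup_left (Submodule.smul_mem _ _ hx2))
          (Submodule.mem_sup_right (Submodule.smul_mem _ _ hu))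
  refine ⟨⨆ n, U n, ?_, ?_⟩
  · -- the supremum is infinite dimensional
    intro hVfd
    have hlt : ∀ n, U n < U (n + 1) := by
      intro n
      refine lt_of_le_of_ne ((hUs n) ▸ le_sup_left) ?_
      intro hEq
      have hmem : g (U n) ∈ U (n + 1) :=
        (hUs n) ▸ Submodule.mem_sup_right (Submodule.mem_span_singleton_self _)
      rw [← hEq] at hmem
      exact hvnotin n W₀ hW₀ (Submodule.mem_sup_right hmem)
    have hfr : ∀ n, n ≤ Module.finrank 𝔽 (U n) := by
      intro n
      induction n with
      | zero => exact Nat.zero_le _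
      | succ n ih =>
        haveI : FiniteDimensional 𝔽 (U (n + 1)) := hfd _
        have h2 : Module.finrank 𝔽 (U n) < Module.finrank 𝔽 (U (n + 1)) :=
          Submodule.finrank_lt_finrank_of_lt (hlt n)
        omega
    haveI := hVfd
    set N := Module.finrank 𝔽 ↥(⨆ n, U n) with hN
    have h1 : N + 1 ≤ Module.finrank 𝔽 (U (N + 1)) := hfr (N + 1)
    have h2 : Module.finrank 𝔽 (U (N + 1)) ≤ N :=
      hN ▸ Submodule.finrank_mono (le_iSup U (N + 1))
    omega
  · -- the supremum meets each member of 𝒜 trivially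
    intro W hW
    rw [eq_bot_iff]
    rintro x hx
    obtain ⟨hx1, hx2⟩ := Submodule.mem_inf.mp hx
    obtain ⟨n, hn⟩ := (Submodule.mem_iSup_of_directed _ hmono.directed_le).mp hx1
    have := hdisj n W hW
    rw [eq_bot_iff] at this
    exact this (Submodule.mem_inf.mpr ⟨hn, hx2⟩)
end
end
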